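/- arXiv:2410.05110 — 2 statements merged into one kernel-verified Lean document; each statement's English description precedes it below -/
import Mathlib

section
/- For 3 ≤ k and (n+3)/2 ≤ l ≤ n-1 with k < l, w_{k,l} = τ (s_2 s_3 ··· s_{l-1})(s_1 s_2 ··· s_{k-1}) = (s_0 s_1 ··· s_{l-3})(s_{n-1} s_0 ··· s_{k-3}) τ, where in the second expression indices of the affine simple reflections are taken modulo n. -/
open Equiv Multiplicative

namespace GU

/-- The action of the finite Weyl group `S_n` on the translation lattice `ℤ^n`. -/
def permHom (n : ℕ) : Equiv.Perm (Fin n) →* MulAut (Multiplicative (Fin n → ℤ)) where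
  toFun u :=
    { toFun := fun l => ofAdd (fun i => toAdd l (u.symm i))
      invFun := fun l => ofAdd (fun i => toAdd l (u i))
      left_inv := fun l => by
        show ofAdd (fun i => toAdd l (u.symm (u i))) = l
        simp
      right_inv := fun l => by
        show ofAdd (fun i => toAdd l (u (u.symm i))) = l
        simp
      map_mul' := fun a b => rfl }
  map_one' := by
    apply MulEquiv.ext; intro l; rfl
  map_mul' := fun a b => by
    apply MulEquiv.ext; intro l; rfl

/-- The extended affine Weyl group of `GL_n`, realized as `ℤ^n ⋊ S_n`,
where `⟨l, u⟩` represents `t^l · u`. -/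
abbrev Wt (n : ℕ) := Multiplicative (Fin n → ℤ) ⋊[permHom n] Equiv.Perm (Fin n)

variable (n : ℕ) [NeZero n]

/-- The translation element `t^l`. -/
def tW (l : Fin n → ℤ) : Wt n := ⟨ofAdd l, 1⟩

open Fin.NatCast in
/-- The finite simple reflection `s_i = (i, i+1)` (1-based), as a permutation. -/
def sf (i : ℕ) : Equiv.Perm (Fin n) := Equiv.swap ((i - 1 : ℕ) : Fin n) ((i : ℕ) : Fin n)

/-- The finite simple reflection `s_i` as an element of the extended affine Weyl group. -/
def sW (i : ℕ) : Wt n := ⟨1, sf n i⟩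

open Fin.NatCast in
/-- The affine simple reflection `s_0 = t^{χ_{1,n}^∨} (1 n)`. -/
def s0 : Wt n :=
  ⟨ofAdd (fun j => if j = ((0 : ℕ) : Fin n) then 1 else if j = ((n - 1 : ℕ) : Fin n) then -1 else 0),
   Equiv.swap ((0 : ℕ) : Fin n) ((n - 1 : ℕ) : Fin n)⟩

/-- The affine simple reflections `s_i`, `i ∈ ℤ/n`. -/
def saff (i : ZMod n) : Wt n := if i = 0 then s0 n else sW n i.val

/-- The descending product `s_{[a,b]} = s_a s_{a-1} ⋯ s_b` (equal to `1` if `a < b`). -/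
def sdesc (a b : ℕ) : Wt n := ((List.range (a + 1 - b)).map (fun j => sW n (a - j))).prod

/-- The descending product `s_{[a,b]} = s_a s_{a-1} ⋯ s_b` in the finite Weyl group. -/
def sfdesc (a b : ℕ) : Equiv.Perm (Fin n) :=
  ((List.range (a + 1 - b)).map (fun j => sf n (a - j))).prod

/-- The cocharacter `μ = (0^{(n-2)}, -1, -1)`. -/
def mu : Fin n → ℤ := fun j => if n - 2 ≤ (j : ℕ) then -1 else 0

/-- The element `w_{k,l} = t^μ s_{[n-2,k]} s_{[n-1,l]}`. -/
def w (k l : ℕ) : Wt n := tW n (mu n) * sdesc n (n - 2) k * sdesc n (n - 1) l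

/-- The length function `ℓ(u t^λ) = Σ_{α ∈ Φ₊, uα ∈ Φ₋} |⟨α,λ⟩+1| + Σ_{α ∈ Φ₊, uα ∈ Φ₊} |⟨α,λ⟩|`,
written for `x = t^l u = u t^{u⁻¹ l}`. -/
def len (x : Wt n) : ℕ :=
  ∑ i : Fin n, ∑ j : Fin n,
    if i < j then
      (toAdd x.left (x.right i) - toAdd x.left (x.right j)
        + (if x.right j < x.right i then 1 else 0)).natAbs
    else 0

/-- The automorphism `σ`, with `σ(s_i) = s_{n-i}` and `σ(t^λ) = t^{λ'}`, `λ'_i = -λ_{n+1-i}`. -/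
def sigma (x : Wt n) : Wt n :=
  ⟨ofAdd (fun j => - toAdd x.left j.rev), Fin.revPerm * x.right * Fin.revPerm⟩

/-- The length-zero element `τ = w_{1,2}`. -/
def tau : Wt n := w n 1 2

/-- Affine reflections: conjugates of the affine simple reflections. -/
def isRefl (r : Wt n) : Prop := ∃ g : Wt n, ∃ i : ZMod n, r = g * saff n i * g⁻¹

/-- The Bruhat order on the extended affine Weyl group: `v ≤ x` iff there is a chain
from `v` to `x` each step of which multiplies by an (affine) reflection and increases length. -/
def bruhatLE (v x : Wt n) : Prop :=
  Relation.ReflTransGen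
    (fun a b => (∃ r, isRefl n r ∧ b = a * r) ∧ len n a < len n b) v x

/-- The support of an element of the affine Weyl group: the smallest set of (indices of)
affine simple reflections generating a subgroup containing it. -/
def supp (x : Wt n) : Set (ZMod n) :=
  ⋂₀ {J : Set (ZMod n) | x ∈ Subgroup.closure (saff n '' J)}

/-- The `σ`-support of `x ∈ W_a τ`: the smallest `Ad(τ)∘σ`-stable set of indices
(`Ad(τ)∘σ` sends `s_i` to `s_{-i-2}`) containing the support of the `W_a`-part of `x`. -/
def suppSigma (x : Wt n) : Set (ZMod n) :=
  ⋂₀ {J : Set (ZMod n) | supp n (x * (tau n)⁻¹) ⊆ J ∧ ∀ i ∈ J, -i - 2 ∈ J}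

/-- `S(x,σ)`: the largest subset `S'` of the finite simple reflections with
`Ad(x)σ(S') = S'`, as a set of (1-based) indices. -/
def SwSigma (x : Wt n) : Set ℕ :=
  ⋃₀ {J : Set ℕ | J ⊆ Set.Icc 1 (n - 1) ∧
    (fun i => x * sigma n (sW n i) * x⁻¹) '' J = sW n '' J}

/-- `x` is of minimal length in its coset `W_0 x`. -/
def minimalInCoset (x : Wt n) : Prop :=
  ∀ u : Equiv.Perm (Fin n), len n x ≤ len n ((⟨1, u⟩ : Wt n) * x)

/-- A single length-preserving `σ`-conjugation step `a ↦ s a σ(s)`. -/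
def approxStep (a b : Wt n) : Prop :=
  ∃ i : ZMod n, b = saff n i * a * sigma n (saff n i) ∧ len n b = len n a

/-- `a ≈ b`: `a` and `b` are connected by length-preserving `σ`-conjugation steps. -/
def approx (a b : Wt n) : Prop := Relation.ReflTransGen (approxStep n) a b

end GU

namespace GU

variable (n : ℕ) [NeZero n]
open Fin.NatCast
set_option linter.unusedSectionVars false
set_option linter.unusedVariables false

lemma sW_eq_inr (i : ℕ) : sW n i = SemidirectProduct.inr (sf n i) := rfl

lemma sdesc_eq_inr (a b : ℕ) :
    sdesc n a b = SemidirectProduct.inr (sfdesc n a b) := by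
  unfold sdesc sfdesc
  rw [map_list_prod, List.map_map]
  rfl

lemma sf_mul_self (i : ℕ) : sf n i * sf n i = 1 := Equiv.swap_mul_self _ _

lemma sW_mul_self (i : ℕ) : sW n i * sW n i = 1 := by
  rw [sW_eq_inr, ← map_mul, sf_mul_self, map_one]

/-- peel the largest index off a descending product -/
lemma sfdesc_peel (a b : ℕ) (hb : 1 ≤ b) (h : b ≤ a) :
    sfdesc n a b = sf n a * sfdesc n (a - 1) b := by
  unfold sfdesc
  have h1 : a + 1 - b = (a - b) + 1 := by omega
  have h2 : a - 1 + 1 - b = a - b := by omega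
  rw [h1, h2, List.range_succ_eq_map, List.map_cons, List.prod_cons, List.map_map,
    Nat.sub_zero]
  congr 1
  apply congr_arg List.prod
  apply List.map_congr_left
  intro j _
  show sf n (a - (j + 1)) = sf n (a - 1 - j)
  congr 1
  omega

lemma sfdesc_single (a : ℕ) : sfdesc n a a = sf n a := by
  unfold sfdesc
  rw [Nat.add_sub_cancel_left]
  simp [List.range_succ]

lemma fin_eq_cast {x : Fin n} {m : ℕ} (hm : m < n) (h : (x : ℕ) = m) :
    x = (m : Fin n) := by
  apply Fin.ext
  rw [Fin.val_cast_of_lt hm, h]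

lemma fin_ne_cast {x : Fin n} {m : ℕ} (hm : m < n) (h : (x : ℕ) ≠ m) :
    x ≠ (m : Fin n) := by
  intro he
  exact h (by rw [he, Fin.val_cast_of_lt hm])

lemma sfdesc_apply (b d : ℕ) (hb : 1 ≤ b) (ha : b + d ≤ n - 1) (x : Fin n) :
    sfdesc n (b + d) b x =
      if (x : ℕ) = b - 1 then ((b + d : ℕ) : Fin n)
      else if b ≤ (x : ℕ) ∧ (x : ℕ) ≤ b + d then (((x : ℕ) - 1 : ℕ) : Fin n)
      else x := by
  have hn : 2 ≤ n := by omega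
  induction d generalizing x with
  | zero =>
    rw [Nat.add_zero, sfdesc_single]
    unfold sf
    by_cases h1 : (x : ℕ) = b - 1
    · rw [if_pos h1, fin_eq_cast n (by omega) h1, Equiv.swap_apply_left]
    · by_cases h2 : (x : ℕ) = b
      · rw [if_neg h1, if_pos (by omega : b ≤ (x : ℕ) ∧ (x : ℕ) ≤ b), h2,
          fin_eq_cast n (by omega) h2, Equiv.swap_apply_right]
      · rw [if_neg h1, if_neg (by omega : ¬(b ≤ (x : ℕ) ∧ (x : ℕ) ≤ b)),
          Equiv.swap_apply_of_ne_of_ne (fin_ne_cast n (by omega) h1)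
            (fin_ne_cast n (by omega) h2)]
  | succ d ih =>
    have hd : b + d ≤ n - 1 := by omega
    have hpeel : sfdesc n (b + (d + 1)) b = sf n (b + d + 1) * sfdesc n (b + d) b := by
      have := sfdesc_peel n (b + (d + 1)) b hb (by omega)
      simpa [Nat.add_assoc] using this
    rw [hpeel, Equiv.Perm.mul_apply, ih hd]
    unfold sf
    have e1 : (b + d + 1 - 1 : ℕ) = b + d := by omega
    rw [e1]
    by_cases h1 : (x : ℕ) = b - 1
    · rw [if_pos h1, if_pos h1, Equiv.swap_apply_left]
      congr 1
    · rw [if_neg h1, if_neg h1]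
      by_cases h2 : b ≤ (x : ℕ) ∧ (x : ℕ) ≤ b + d
      · rw [if_pos h2, if_pos (by omega : b ≤ (x : ℕ) ∧ (x : ℕ) ≤ b + (d + 1))]
        have hv1 : (((x : ℕ) - 1 : ℕ) : Fin n) ≠ ((b + d : ℕ) : Fin n) := by
          apply fin_ne_cast n (by omega)
          rw [Fin.val_cast_of_lt (by omega : (x : ℕ) - 1 < n)]
          omega
        have hv2 : (((x : ℕ) - 1 : ℕ) : Fin n) ≠ ((b + d + 1 : ℕ) : Fin n) := by
          apply fin_ne_cast n (by omega)
          rw [Fin.val_cast_of_lt (by omega : (x : ℕ) - 1 < n)]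
          omega
        rw [Equiv.swap_apply_of_ne_of_ne hv1 hv2]
      · rw [if_neg h2]
        by_cases h3 : (x : ℕ) = b + d + 1
        · rw [if_pos (by omega : b ≤ (x : ℕ) ∧ (x : ℕ) ≤ b + (d + 1)), h3,
            fin_eq_cast n (by omega) h3, Equiv.swap_apply_right]
          congr 1
        · rw [if_neg (by omega : ¬(b ≤ (x : ℕ) ∧ (x : ℕ) ≤ b + (d + 1))),
            Equiv.swap_apply_of_ne_of_ne
              (fin_ne_cast n (by omega) (by omega : (x : ℕ) ≠ b + d))
              (fin_ne_cast n (by omega) h3)]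

lemma fin_sub_two (hn : 2 ≤ n) (x : Fin n) : x - 2 = (((x : ℕ) + n - 2 : ℕ) : Fin n) := by
  rw [sub_eq_iff_eq_add]
  have h2 : (2 : Fin n) = ((2 : ℕ) : Fin n) := by norm_cast
  rw [h2, ← Nat.cast_add]
  have e : (x : ℕ) + n - 2 + 2 = (x : ℕ) + n := by
    have := x.isLt
    omega
  rw [e, Nat.cast_add, Fin.natCast_self, add_zero, Fin.cast_val_eq_self]

lemma perm_tau (hn : 5 ≤ n) :
    sfdesc n (n - 2) 1 * sfdesc n (n - 1) 2 = (Equiv.subRight (2 : Fin n)) := by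
  apply Equiv.ext
  intro x
  have hv := x.isLt
  have h2 := sfdesc_apply n 2 (n - 3) (by omega) (by omega)
  have h1 := sfdesc_apply n 1 (n - 3) (by omega) (by omega)
  have e2 : 2 + (n - 3) = n - 1 := by omega
  have e1 : 1 + (n - 3) = n - 2 := by omega
  rw [e2] at h2
  rw [e1] at h1
  rw [Equiv.Perm.mul_apply, Equiv.subRight_apply, fin_sub_two n (by omega), h2 x]
  by_cases hx1 : (x : ℕ) = 2 - 1
  · rw [if_pos hx1, h1, if_neg, if_neg]
    · congr 1
      omega
    · rw [Fin.val_cast_of_lt (by omega : n - 1 < n)]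
      omega
    · rw [Fin.val_cast_of_lt (by omega : n - 1 < n)]
      omega
  · rw [if_neg hx1]
    by_cases hx2 : 2 ≤ (x : ℕ) ∧ (x : ℕ) ≤ n - 1
    · rw [if_pos hx2, h1, if_neg, if_pos]
      · rw [Fin.val_cast_of_lt (by omega : (x : ℕ) - 1 < n)]
        have e : (x : ℕ) + n - 2 = ((x : ℕ) - 1 - 1) + n := by omega
        rw [e, Nat.cast_add, Fin.natCast_self, add_zero]
      · rw [Fin.val_cast_of_lt (by omega : (x : ℕ) - 1 < n)]
        omega
      · rw [Fin.val_cast_of_lt (by omega : (x : ℕ) - 1 < n)]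
        omega
    · rw [if_neg hx2, h1, if_pos (by omega : (x : ℕ) = 1 - 1)]
      congr 1
      omega

lemma mk_mul_mk (a b : Multiplicative (Fin n → ℤ)) (u v : Equiv.Perm (Fin n)) :
    (⟨a, u⟩ : Wt n) * ⟨b, v⟩ = ⟨a * permHom n u b, u * v⟩ := rfl

lemma tau_eq (hn : 5 ≤ n) :
    tau n = ⟨Multiplicative.ofAdd (mu n), Equiv.subRight (2 : Fin n)⟩ := by
  unfold tau w tW
  rw [sdesc_eq_inr, sdesc_eq_inr]
  apply SemidirectProduct.ext
  · simp [SemidirectProduct.mul_left]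
  · simp only [SemidirectProduct.mul_right]
    rw [← perm_tau n hn]
    show 1 * sfdesc n (n - 2) 1 * sfdesc n (n - 1) 2 = _
    rw [one_mul]

/-- ascending products -/
def ascW (m b : ℕ) : Wt n := ((List.range m).map (fun j => sW n (b + j))).prod

lemma sdesc_single (a : ℕ) : sdesc n a a = sW n a := by
  rw [sdesc_eq_inr, sW_eq_inr, sfdesc_single]

lemma sdesc_peel (a b : ℕ) (hb : 1 ≤ b) (h : b ≤ a) :
    sdesc n a b = sW n a * sdesc n (a - 1) b := by
  rw [sdesc_eq_inr, sdesc_eq_inr, sW_eq_inr, ← map_mul, sfdesc_peel n a b hb h]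

lemma ascW_succ (m b : ℕ) : ascW n (m + 1) b = ascW n m b * sW n (b + m) := by
  unfold ascW
  rw [List.range_succ, List.map_append, List.prod_append]
  simp

lemma sdesc_mul_ascW (d b : ℕ) (hb : 1 ≤ b) :
    sdesc n (b + d) b * ascW n (d + 1) b = 1 := by
  induction d with
  | zero =>
    rw [Nat.add_zero, sdesc_single, ascW_succ]
    show sW n b * (ascW n 0 b * sW n (b + 0)) = 1
    unfold ascW
    rw [List.range_zero, List.map_nil, List.prod_nil, one_mul, Nat.add_zero, sW_mul_self]
  | succ d ih =>
    have hpeel : sdesc n (b + (d + 1)) b = sW n (b + (d + 1)) * sdesc n (b + d) b := by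
      have := sdesc_peel n (b + (d + 1)) b hb (by omega)
      simpa using this
    rw [hpeel, ascW_succ, ← mul_assoc, mul_assoc (sW n (b + (d + 1))), ih, mul_one,
      sW_mul_self]

lemma sdesc_inv (a b : ℕ) (hb : 1 ≤ b) (h : b ≤ a) :
    (sdesc n a b)⁻¹ = ascW n (a + 1 - b) b := by
  apply inv_eq_of_mul_eq_one_right
  have := sdesc_mul_ascW n (a - b) b hb
  have e1 : b + (a - b) = a := by omega
  have e2 : (a - b) + 1 = a + 1 - b := by omega
  rw [e1, e2] at this
  exact this

lemma sdesc_split (a b m : ℕ) (h1 : b ≤ m + 1) (h2 : m ≤ a) :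
    sdesc n a b = sdesc n a (m + 1) * sdesc n m b := by
  unfold sdesc
  have e : a + 1 - b = (a + 1 - (m + 1)) + (m + 1 - b) := by omega
  rw [e, List.range_add, List.map_append, List.prod_append, List.map_map]
  congr 1
  apply congr_arg List.prod
  apply List.map_congr_left
  intro j hj
  rw [List.mem_range] at hj
  show sW n (a - (a + 1 - (m + 1) + j)) = sW n (m - j)
  congr 1
  omega

lemma cast_ne_cast {a b : ℕ} (ha : a < n) (hb : b < n) (h : a ≠ b) :
    (a : Fin n) ≠ (b : Fin n) := by
  intro he
  exact h (by rw [← Fin.val_cast_of_lt ha, he, Fin.val_cast_of_lt hb])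

lemma swap_commute {α : Type*} [DecidableEq α] {a b c d : α}
    (h1 : a ≠ c) (h2 : a ≠ d) (h3 : b ≠ c) (h4 : b ≠ d) :
    Commute (Equiv.swap a b) (Equiv.swap c d) := by
  apply Equiv.Perm.Disjoint.commute
  intro x
  by_cases hc : x = c
  · left
    subst hc
    exact Equiv.swap_apply_of_ne_of_ne (Ne.symm h1) (Ne.symm h3)
  · by_cases hd : x = d
    · left
      subst hd
      exact Equiv.swap_apply_of_ne_of_ne (Ne.symm h2) (Ne.symm h4)
    · right
      exact Equiv.swap_apply_of_ne_of_ne hc hd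

lemma commute_sW (i j : ℕ) (hi : 1 ≤ i) (hij : i + 2 ≤ j) (hj : j ≤ n - 1) :
    Commute (sW n i) (sW n j) := by
  have hn : 3 ≤ n := by omega
  rw [sW_eq_inr, sW_eq_inr]
  apply Commute.map
  unfold sf
  exact swap_commute (cast_ne_cast n (by omega) (by omega) (by omega))
    (cast_ne_cast n (by omega) (by omega) (by omega))
    (cast_ne_cast n (by omega) (by omega) (by omega))
    (cast_ne_cast n (by omega) (by omega) (by omega))

lemma permHom_ofAdd (u : Equiv.Perm (Fin n)) (f : Fin n → ℤ) :
    permHom n u (Multiplicative.ofAdd f) = Multiplicative.ofAdd (fun i => f (u.symm i)) := rfl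

lemma ofAdd_mul' (f g : Fin n → ℤ) :
    Multiplicative.ofAdd f * Multiplicative.ofAdd g = Multiplicative.ofAdd (f + g) := rfl

lemma r_mul_swap (a b : Fin n) :
    (Equiv.subRight (2 : Fin n) : Equiv.Perm (Fin n)) * Equiv.swap a b
      = Equiv.swap (Equiv.subRight (2 : Fin n) a) (Equiv.subRight (2 : Fin n) b)
        * Equiv.subRight (2 : Fin n) := by
  rw [Equiv.swap_apply_apply]
  group

lemma rBig (hn : 5 ≤ n) {m : ℕ} (hm : 2 ≤ m) (hm2 : m < n) :
    Equiv.subRight (2 : Fin n) ((m : ℕ) : Fin n) = ((m - 2 : ℕ) : Fin n) := by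
  rw [Equiv.subRight_apply, fin_sub_two n (by omega), Fin.val_cast_of_lt hm2]
  have e : m + n - 2 = (m - 2) + n := by omega
  rw [e, Nat.cast_add, Fin.natCast_self, add_zero]

lemma rSmall (hn : 5 ≤ n) {m : ℕ} (hm : m < 2) :
    Equiv.subRight (2 : Fin n) ((m : ℕ) : Fin n) = ((m + n - 2 : ℕ) : Fin n) := by
  rw [Equiv.subRight_apply, fin_sub_two n (by omega), Fin.val_cast_of_lt (by omega)]

lemma fin_add_two_val (hn : 5 ≤ n) (j : Fin n) :
    ((j + 2 : Fin n) : ℕ) = if (j : ℕ) < n - 2 then (j : ℕ) + 2 else (j : ℕ) + 2 - n := by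
  have hj := j.isLt
  have h2 : ((2 : Fin n) : ℕ) = 2 := by
    rw [show (2 : Fin n) = ((2 : ℕ) : Fin n) from by norm_cast, Fin.val_cast_of_lt (by omega)]
  rw [Fin.add_def, h2]
  by_cases h : (j : ℕ) < n - 2
  · rw [if_pos h]
    show ((j : ℕ) + 2) % n = (j : ℕ) + 2
    rw [Nat.mod_eq_of_lt (by omega)]
  · rw [if_neg h]
    show ((j : ℕ) + 2) % n = (j : ℕ) + 2 - n
    rw [Nat.mod_eq_sub_mod (by omega), Nat.mod_eq_of_lt (by omega)]

lemma mu_apply_cast (hn : 5 ≤ n) {m : ℕ} (hm : m < n) :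
    mu n ((m : ℕ) : Fin n) = if n - 2 ≤ m then -1 else 0 := by
  unfold mu
  rw [Fin.val_cast_of_lt hm]

lemma saff_cast (m : ℕ) (h1 : 1 ≤ m) (h2 : m ≤ n - 1) :
    saff n ((m : ℕ) : ZMod n) = sW n m := by
  have hn1 : 2 ≤ n := by omega
  have hval : ((m : ℕ) : ZMod n).val = m := by
    rw [ZMod.val_natCast, Nat.mod_eq_of_lt (by omega)]
  unfold saff
  rw [if_neg (by
    intro h
    rw [h, ZMod.val_zero] at hval
    omega), hval]

lemma mk_left (a : Multiplicative (Fin n → ℤ)) (u : Equiv.Perm (Fin n)) :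
    (⟨a, u⟩ : Wt n).left = a := rfl

lemma mk_right (a : Multiplicative (Fin n → ℤ)) (u : Equiv.Perm (Fin n)) :
    (⟨a, u⟩ : Wt n).right = u := rfl

lemma sW_left (i : ℕ) : (sW n i).left = 1 := rfl

lemma sW_right (i : ℕ) : (sW n i).right = sf n i := rfl

lemma s0_left : (s0 n).left = Multiplicative.ofAdd
    (fun j => if j = ((0 : ℕ) : Fin n) then (1 : ℤ)
      else if j = ((n - 1 : ℕ) : Fin n) then -1 else 0) := rfl

lemma s0_right : (s0 n).right = Equiv.swap ((0 : ℕ) : Fin n) ((n - 1 : ℕ) : Fin n) := rfl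

lemma tau_mul_saff (hn : 5 ≤ n) (i : ZMod n) :
    tau n * saff n i = saff n (i - 2) * tau n := by
  have hvlt : i.val < n := ZMod.val_lt i
  have hi : ((i.val : ℕ) : ZMod n) = i := by
    rw [ZMod.natCast_val, ZMod.cast_id]
  rw [tau_eq n hn]
  by_cases hv0 : i = 0
  · -- i = 0
    subst hv0
    have h1 : saff n (0 : ZMod n) = s0 n := by
      unfold saff
      rw [if_pos rfl]
    have hm2 : (0 : ZMod n) - 2 = ((n - 2 : ℕ) : ZMod n) := by
      push_cast [Nat.cast_sub (show 2 ≤ n by omega)]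
      simp
    have h2 : saff n ((0 : ZMod n) - 2) = sW n (n - 2) := by
      rw [hm2, saff_cast n _ (by omega) (by omega)]
    rw [h1, h2]
    apply SemidirectProduct.ext
    · simp only [SemidirectProduct.mul_left, mk_left, mk_right, sW_left, sW_right,
        s0_left, s0_right, one_mul, mul_one, map_one, permHom_ofAdd, ofAdd_mul']
      apply congrArg
      funext j
      have hj := j.isLt
      simp only [Pi.add_apply]
      rw [show (Equiv.subRight (2 : Fin n)).symm j = j + 2 from rfl]
      have hA := fin_add_two_val n hn j
      have c1 : ((j + 2 : Fin n) = ((0 : ℕ) : Fin n)) ↔ (j : ℕ) = n - 2 := by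
        rw [Fin.ext_iff, hA, Fin.val_cast_of_lt (show (0 : ℕ) < n by omega)]
        by_cases h : (j : ℕ) < n - 2
        · rw [if_pos h]
          omega
        · rw [if_neg h]
          omega
      have c2 : ((j + 2 : Fin n) = ((n - 1 : ℕ) : Fin n)) ↔ (j : ℕ) = n - 3 := by
        rw [Fin.ext_iff, hA, Fin.val_cast_of_lt (show n - 1 < n by omega)]
        by_cases h : (j : ℕ) < n - 2
        · rw [if_pos h]
          omega
        · rw [if_neg h]
          omega
      unfold sf
      rw [Equiv.symm_swap]
      by_cases h3 : (j : ℕ) = n - 3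
      · have hsw : (Equiv.swap ((n - 2 - 1 : ℕ) : Fin n) ((n - 2 : ℕ) : Fin n)) j
            = ((n - 2 : ℕ) : Fin n) := by
          have e : (n - 2 - 1 : ℕ) = n - 3 := by omega
          rw [e, fin_eq_cast n (by omega : n - 3 < n) h3]
          exact Equiv.swap_apply_left _ _
        rw [if_neg (by rw [c1]; omega), if_pos (c2.mpr h3), hsw,
          mu_apply_cast n hn (by omega), if_pos (by omega)]
        unfold mu
        rw [if_neg (show ¬(n - 2 ≤ (j : ℕ)) by omega)]
        norm_num
      · by_cases h4 : (j : ℕ) = n - 2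
        · have hsw : (Equiv.swap ((n - 2 - 1 : ℕ) : Fin n) ((n - 2 : ℕ) : Fin n)) j
              = ((n - 2 - 1 : ℕ) : Fin n) := by
            rw [fin_eq_cast n (by omega : n - 2 < n) h4]
            exact Equiv.swap_apply_right _ _
          rw [if_pos (c1.mpr h4), hsw, mu_apply_cast n hn (by omega), if_neg (by omega)]
          unfold mu
          rw [if_pos (show n - 2 ≤ (j : ℕ) by omega)]
          norm_num
        · have hsw : (Equiv.swap ((n - 2 - 1 : ℕ) : Fin n) ((n - 2 : ℕ) : Fin n)) j = j :=
            Equiv.swap_apply_of_ne_of_ne (fin_ne_cast n (by omega) (by omega))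
              (fin_ne_cast n (by omega) h4)
          rw [if_neg (by rw [c1]; omega), if_neg (by rw [c2]; omega), hsw, add_zero]
    · simp only [SemidirectProduct.mul_right, mk_right, sW_right, s0_right]
      unfold sf
      rw [r_mul_swap, rSmall n hn (by omega), rBig n hn (by omega) (by omega)]
      have e1 : (0 + n - 2 : ℕ) = n - 2 := by omega
      have e2 : (n - 1 - 2 : ℕ) = n - 2 - 1 := by omega
      rw [e1, e2, Equiv.swap_comm]
  · have hv0' : i.val ≠ 0 := fun h => hv0 ((ZMod.val_eq_zero i).mp h)
    by_cases hv1 : i.val = 1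
    · -- i.val = 1
      rw [hv1] at hi
      have h1 : saff n i = sW n 1 := by
        unfold saff
        rw [if_neg hv0, hv1]
      have hm2 : i - 2 = ((n - 1 : ℕ) : ZMod n) := by
        rw [← hi]
        have e : ((n - 1 : ℕ) : ZMod n) = ((n : ℕ) : ZMod n) - 1 := by
          push_cast [Nat.cast_sub (show 1 ≤ n by omega)]
          ring
        rw [e, ZMod.natCast_self]
        push_cast
        ring
      have h2 : saff n (i - 2) = sW n (n - 1) := by
        rw [hm2, saff_cast n _ (by omega) (by omega)]
      rw [h1, h2]
      apply SemidirectProduct.ext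
      · simp only [SemidirectProduct.mul_left, mk_left, mk_right, sW_left, sW_right,
          map_one, mul_one, one_mul, permHom_ofAdd]
        apply congrArg
        funext j
        have hj := j.isLt
        unfold sf
        rw [Equiv.symm_swap]
        have e : (n - 1 - 1 : ℕ) = n - 2 := by omega
        rw [e]
        by_cases ha : j = ((n - 2 : ℕ) : Fin n)
        · rw [ha, Equiv.swap_apply_left, mu_apply_cast n hn (by omega),
            mu_apply_cast n hn (by omega), if_pos (by omega), if_pos (by omega)]
        · by_cases hb : j = ((n - 1 : ℕ) : Fin n)
          · rw [hb, Equiv.swap_apply_right, mu_apply_cast n hn (by omega),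
              mu_apply_cast n hn (by omega), if_pos (by omega), if_pos (by omega)]
          · rw [Equiv.swap_apply_of_ne_of_ne ha hb]
      · simp only [SemidirectProduct.mul_right, mk_right, sW_right]
        unfold sf
        rw [r_mul_swap, rSmall n hn (by omega), rSmall n hn (by omega)]
        have e1 : (1 - 1 + n - 2 : ℕ) = n - 1 - 1 := by omega
        have e2 : (1 + n - 2 : ℕ) = n - 1 := by omega
        rw [e1, e2]
    · by_cases hv2 : i.val = 2
      · -- i.val = 2
        rw [hv2] at hi
        have h1 : saff n i = sW n 2 := by
          unfold saff
          rw [if_neg hv0, hv2]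
        have hm2 : i - 2 = 0 := by
          rw [← hi]
          push_cast
          ring
        have h2 : saff n (i - 2) = s0 n := by
          rw [hm2]
          unfold saff
          rw [if_pos rfl]
        rw [h1, h2]
        apply SemidirectProduct.ext
        · simp only [SemidirectProduct.mul_left, mk_left, mk_right, sW_left, sW_right,
            s0_left, s0_right, map_one, mul_one, one_mul, permHom_ofAdd, ofAdd_mul']
          apply congrArg
          funext j
          have hj := j.isLt
          simp only [Pi.add_apply]
          rw [Equiv.symm_swap]
          by_cases ha : j = ((0 : ℕ) : Fin n)
          · rw [if_pos ha, ha, Equiv.swap_apply_left, mu_apply_cast n hn (by omega),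
              mu_apply_cast n hn (by omega), if_neg (by omega), if_pos (by omega)]
            norm_num
          · by_cases hb : j = ((n - 1 : ℕ) : Fin n)
            · rw [if_neg ha, if_pos hb, hb, Equiv.swap_apply_right,
                mu_apply_cast n hn (by omega), mu_apply_cast n hn (by omega),
                if_pos (by omega), if_neg (by omega)]
              norm_num
            · rw [if_neg ha, if_neg hb, Equiv.swap_apply_of_ne_of_ne ha hb, zero_add]
        · simp only [SemidirectProduct.mul_right, mk_right, sW_right, s0_right]
          unfold sf
          rw [r_mul_swap, rSmall n hn (by omega), rBig n hn (by omega) (by omega)]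
          have e1 : (2 - 1 + n - 2 : ℕ) = n - 1 := by omega
          have e2 : (2 - 2 : ℕ) = 0 := by omega
          rw [e1, e2, Equiv.swap_comm]
      · -- generic case: 3 ≤ i.val
        have hv3 : 3 ≤ i.val := by omega
        have h1 : saff n i = sW n i.val := by
          unfold saff
          rw [if_neg hv0]
        have hm2 : i - 2 = ((i.val - 2 : ℕ) : ZMod n) := by
          have e : ((i.val - 2 : ℕ) : ZMod n) = ((i.val : ℕ) : ZMod n) - 2 := by
            push_cast [Nat.cast_sub (show 2 ≤ i.val by omega)]
            ring
          rw [e, hi]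
        have h2 : saff n (i - 2) = sW n (i.val - 2) := by
          rw [hm2, saff_cast n _ (by omega) (by omega)]
        rw [h1, h2]
        apply SemidirectProduct.ext
        · simp only [SemidirectProduct.mul_left, mk_left, mk_right, sW_left, sW_right,
            map_one, mul_one, one_mul, permHom_ofAdd]
          apply congrArg
          funext j
          unfold sf
          rw [Equiv.symm_swap]
          by_cases ha : j = ((i.val - 2 - 1 : ℕ) : Fin n)
          · rw [ha, Equiv.swap_apply_left, mu_apply_cast n hn (by omega),
              mu_apply_cast n hn (by omega), if_neg (by omega), if_neg (by omega)]
          · by_cases hb : j = ((i.val - 2 : ℕ) : Fin n)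
            · rw [hb, Equiv.swap_apply_right, mu_apply_cast n hn (by omega),
                mu_apply_cast n hn (by omega), if_neg (by omega), if_neg (by omega)]
            · rw [Equiv.swap_apply_of_ne_of_ne ha hb]
        · simp only [SemidirectProduct.mul_right, mk_left, mk_right, sW_left, sW_right]
          unfold sf
          rw [r_mul_swap, rBig n hn (by omega) (by omega), rBig n hn (by omega) (by omega)]
          have e : i.val - 1 - 2 = i.val - 2 - 1 := by omega
          rw [e]

lemma tau_mul_prod (hn : 5 ≤ n) (L : List (ZMod n)) :
    tau n * (L.map (saff n)).prod = (L.map (fun i => saff n (i - 2))).prod * tau n := by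
  induction L with
  | nil => simp
  | cons a L ih =>
    simp only [List.map_cons, List.prod_cons]
    rw [← mul_assoc, tau_mul_saff n hn a, mul_assoc, ih, ← mul_assoc]

lemma ascW_saff (m b : ℕ) (hb : 1 ≤ b) (h : b + m ≤ n) :
    ascW n m b
      = (((List.range m).map (fun j => ((b + j : ℕ) : ZMod n))).map (saff n)).prod := by
  unfold ascW
  rw [List.map_map]
  apply congr_arg List.prod
  apply List.map_congr_left
  intro j hj
  rw [List.mem_range] at hj
  exact (saff_cast n (b + j) (by omega) (by omega)).symm

lemma stmt5_first (hn : 5 ≤ n) (k l : ℕ) (hk : 3 ≤ k) (hkl : k < l) (hl2 : l ≤ n - 1) :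
    w n k l = tau n * (sdesc n (l - 1) 2)⁻¹ * (sdesc n (k - 1) 1)⁻¹ := by
  rw [sdesc_inv n (l - 1) 2 (by omega) (by omega),
    sdesc_inv n (k - 1) 1 (by omega) (by omega),
    show (l - 1) + 1 - 2 = l - 2 from by omega,
    show (k - 1) + 1 - 1 = k - 1 from by omega]
  unfold tau
  show w n k l = w n 1 2 * ascW n (l - 2) 2 * ascW n (k - 1) 1
  unfold w
  rw [sdesc_split n (n - 2) 1 (k - 1) (by omega) (by omega),
    sdesc_split n (n - 1) 2 (l - 1) (by omega) (by omega),
    show (k - 1) + 1 = k from by omega, show (l - 1) + 1 = l from by omega]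
  have h1 : sdesc n (l - 1) 2 * ascW n (l - 2) 2 = 1 := by
    have := sdesc_mul_ascW n (l - 3) 2 (by omega)
    rw [show 2 + (l - 3) = l - 1 from by omega, show (l - 3) + 1 = l - 2 from by omega] at this
    exact this
  have h2 : sdesc n (k - 1) 1 * ascW n (k - 1) 1 = 1 := by
    have := sdesc_mul_ascW n (k - 2) 1 (by omega)
    rw [show 1 + (k - 2) = k - 1 from by omega, show (k - 2) + 1 = k - 1 from by omega] at this
    exact this
  have hc : Commute (sdesc n (k - 1) 1) (sdesc n (n - 1) l) := by
    unfold sdesc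
    apply Commute.list_prod_left
    intro x hx
    apply Commute.list_prod_right
    intro y hy
    simp only [List.mem_map, List.mem_range] at hx hy
    obtain ⟨j1, hj1, rfl⟩ := hx
    obtain ⟨j2, hj2, rfl⟩ := hy
    exact commute_sW n _ _ (by omega) (by omega) (by omega)
  simp only [mul_assoc]
  congr 2
  rw [← mul_assoc (sdesc n (l - 1) 2), h1, one_mul,
    ← mul_assoc (sdesc n (k - 1) 1) (sdesc n (n - 1) l), hc.eq,
    mul_assoc (sdesc n (n - 1) l), h2, mul_one]

theorem stmt5_aux (hn : 5 ≤ n) (k l : ℕ)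
    (hk : 3 ≤ k) (hkl : k < l) (hl2 : l ≤ n - 1) :
    w n k l =
      ((List.range (l - 2)).map (fun j => saff n (j : ZMod n))).prod *
      ((List.range (k - 1)).map (fun j => saff n ((n - 1 + j : ℕ) : ZMod n))).prod *
      tau n := by
  rw [stmt5_first n hn k l hk hkl hl2,
    sdesc_inv n (l - 1) 2 (by omega) (by omega),
    sdesc_inv n (k - 1) 1 (by omega) (by omega),
    show (l - 1) + 1 - 2 = l - 2 from by omega,
    show (k - 1) + 1 - 1 = k - 1 from by omega,
    ascW_saff n (l - 2) 2 (by omega) (by omega),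
    ascW_saff n (k - 1) 1 (by omega) (by omega),
    tau_mul_prod n hn, mul_assoc, tau_mul_prod n hn, ← mul_assoc]
  congr 1
  congr 1
  · have hdo : (do let a ← List.range (l - 2); pure ((a : ℕ) : ZMod n))
        = (List.range (l - 2)).map (fun a => ((a : ℕ) : ZMod n)) := by
      show ((List.range (l - 2)).flatMap fun a => [((a : ℕ) : ZMod n)]) = _
      induction (List.range (l - 2)) with
      | nil => rfl
      | cons a L ih => simp_all
    rw [hdo, List.map_map, List.map_map]
    apply congr_arg List.prod
    apply List.map_congr_left
    intro j hj
    show saff n (((2 + j : ℕ) : ZMod n) - 2) = saff n ((j : ℕ) : ZMod n)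
    congr 1
    push_cast
    ring
  · rw [List.map_map]
    apply congr_arg List.prod
    apply List.map_congr_left
    intro j hj
    show saff n (((1 + j : ℕ) : ZMod n) - 2) = saff n ((n - 1 + j : ℕ) : ZMod n)
    congr 1
    push_cast [Nat.cast_sub (show 1 ≤ n by omega)]
    rw [ZMod.natCast_self]
    ring

end GU
/-- `w_{k,l} = τ (s_2⋯s_{l-1})(s_1⋯s_{k-1}) = (s_0 s_1⋯s_{l-3})(s_{n-1} s_0⋯s_{k-3}) τ`,
indices in the second expression taken mod `n`. -/
theorem stmt5 (n : ℕ) [NeZero n] (hn : 5 ≤ n) (k l : ℕ)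
    (hk : 3 ≤ k) (hkl : k < l) (hl1 : n + 3 ≤ 2 * l) (hl2 : l ≤ n - 1) :
    GU.w n k l = GU.tau n * (GU.sdesc n (l - 1) 2)⁻¹ * (GU.sdesc n (k - 1) 1)⁻¹ ∧
    GU.w n k l =
      ((List.range (l - 2)).map (fun j => GU.saff n (j : ZMod n))).prod *
      ((List.range (k - 1)).map (fun j => GU.saff n ((n - 1 + j : ℕ) : ZMod n))).prod *
      GU.tau n := by
  exact ⟨GU.stmt5_first n hn k l hk hkl hl2,
    GU.stmt5_aux n hn k l hk hkl hl2⟩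
end

section
/- Let y_{k,k+1} = s_{[n-2,k]} s_{[n-1,k+1]} ∈ S_n with 2 ≤ k ≤ n/2. Then y_{k,k+1} σ(s_i) y_{k,k+1}^{-1} = s_{n-i-2} for 1 ≤ i ≤ n-k-2, equals the transposition (k, n) for i = n-k-1, equals s_{n-1} for i = n-k, equals the transposition (k-1, n-1) for i = n-k+1, and equals s_{n-i} for n-k+2 ≤ i ≤ n-1, where σ(s_i) = s_{n-i} on the finite Weyl group S_n. -/
open Equiv Multiplicative

section Aux

open Fin.NatCast

lemma finCast_inj (n : ℕ) [NeZero n] (p q : ℕ) (hp : p < n) (hq : q < n) :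
    ((p : Fin n) = (q : Fin n)) ↔ p = q := by
  constructor
  · intro h
    have := congrArg Fin.val h
    rwa [Fin.val_cast_of_lt hp, Fin.val_cast_of_lt hq] at this
  · rintro rfl; rfl

lemma sf_apply (n : ℕ) [NeZero n] (i x : ℕ) (hi1 : 1 ≤ i) (hi : i < n) (hx : x < n) :
    GU.sf n i ((x : ℕ) : Fin n) =
      if x = i - 1 then (i : Fin n) else if x = i then ((i - 1 : ℕ) : Fin n)
      else (x : Fin n) := by
  unfold GU.sf
  rcases eq_or_ne x (i - 1) with h1 | h1
  · rw [if_pos h1, h1, Equiv.swap_apply_left]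
  · rw [if_neg h1]
    rcases eq_or_ne x i with h2 | h2
    · rw [if_pos h2, h2, Equiv.swap_apply_right]
    · rw [if_neg h2]
      apply Equiv.swap_apply_of_ne_of_ne
      · rw [Ne, finCast_inj n x (i - 1) hx (by omega)]; exact h1
      · rw [Ne, finCast_inj n x i hx hi]; exact h2

lemma sfdesc_peel (n : ℕ) [NeZero n] (a b : ℕ) (hba : b ≤ a) :
    GU.sfdesc n (a + 1) b = GU.sf n (a + 1) * GU.sfdesc n a b := by
  unfold GU.sfdesc
  have h1 : a + 1 + 1 - b = (a + 1 - b) + 1 := by omega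
  rw [h1, List.range_succ_eq_map, List.map_cons, List.prod_cons, List.map_map, Nat.sub_zero]
  congr 2
  apply List.map_congr_left
  intro j _
  simp only [Function.comp_apply]
  congr 1
  omega

lemma sfdesc_self (n : ℕ) [NeZero n] (a : ℕ) : GU.sfdesc n a a = GU.sf n a := by
  unfold GU.sfdesc
  rw [show a + 1 - a = 1 from by omega, show List.range 1 = [0] from rfl, List.map_singleton,
    List.prod_singleton, Nat.sub_zero]

lemma sfdesc_apply (n : ℕ) [NeZero n] (a b : ℕ) (hb : 1 ≤ b) (hba : b ≤ a) (ha : a < n) (x : ℕ) (hx : x < n) :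
    GU.sfdesc n a b ((x : ℕ) : Fin n) =
      if x = b - 1 then (a : Fin n)
      else if b ≤ x ∧ x ≤ a then ((x - 1 : ℕ) : Fin n)
      else (x : Fin n) := by
  induction a, hba using Nat.le_induction with
  | base =>
    rw [sfdesc_self, sf_apply n b x hb ha hx]
    rcases eq_or_ne x (b - 1) with h1 | h1
    · simp [h1]
    · rw [if_neg h1, if_neg h1]
      rcases eq_or_ne x b with h2 | h2
      · rw [if_pos h2, if_pos ⟨by omega, by omega⟩]; congr 1; omega
      · rw [if_neg h2, if_neg (by omega)]
  | succ a hba ih =>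
    rw [sfdesc_peel n a b hba, Equiv.Perm.mul_apply, ih (by omega)]
    rcases eq_or_ne x (b - 1) with h1 | h1
    · rw [if_pos h1, if_pos h1, sf_apply n (a + 1) a (by omega) ha (by omega)]
      rw [if_pos (by omega)]
    · rw [if_neg h1, if_neg h1]
      rcases (em (b ≤ x ∧ x ≤ a)) with h2 | h2
      · rw [if_pos h2, if_pos ⟨h2.1, by omega⟩,
          sf_apply n (a + 1) (x - 1) (by omega) ha (by omega)]
        rw [if_neg (by omega), if_neg (by omega)]
      · rw [if_neg h2, sf_apply n (a + 1) x (by omega) ha hx]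
        rcases eq_or_ne x (a + 1) with h3 | h3
        · rw [if_neg (by omega), if_pos h3, if_pos (by omega)]
          congr 1; omega
        · rw [if_neg (by omega), if_neg h3, if_neg (by omega)]

lemma y_apply (n k : ℕ) [NeZero n] (hn : 4 ≤ n) (hk : 2 ≤ k) (hk2 : 2 * k ≤ n)
    (x : ℕ) (hx : x < n) :
    (GU.sfdesc n (n - 2) k * GU.sfdesc n (n - 1) (k + 1)) ((x : ℕ) : Fin n) =
      if x ≤ k - 2 then (x : Fin n)
      else if x = k - 1 then ((n - 2 : ℕ) : Fin n)
      else if x = k then ((n - 1 : ℕ) : Fin n)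
      else ((x - 2 : ℕ) : Fin n) := by
  rw [Equiv.Perm.mul_apply,
    sfdesc_apply n (n - 1) (k + 1) (by omega) (by omega) (by omega) x hx]
  rcases (em (x ≤ k - 2)) with h0 | h0
  · rw [if_neg (by omega), if_neg (by omega),
      sfdesc_apply n (n - 2) k (by omega) (by omega) (by omega) x hx,
      if_neg (by omega), if_neg (by omega), if_pos h0]
  rcases eq_or_ne x (k - 1) with h1 | h1
  · rw [if_neg (by omega), if_neg (by omega),
      sfdesc_apply n (n - 2) k (by omega) (by omega) (by omega) x hx,
      if_pos (by omega), if_neg (by omega), if_pos h1]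
  rcases eq_or_ne x k with h2 | h2
  · rw [if_pos (by omega),
      sfdesc_apply n (n - 2) k (by omega) (by omega) (by omega) (n - 1) (by omega),
      if_neg (by omega), if_neg (by omega), if_neg (by omega), if_neg (by omega),
      if_pos h2]
  · have hx1 : k + 1 ≤ x ∧ x ≤ n - 1 := ⟨by omega, by omega⟩
    rw [if_neg (by omega), if_pos hx1,
      sfdesc_apply n (n - 2) k (by omega) (by omega) (by omega) (x - 1) (by omega),
      if_neg (by omega), if_pos ⟨by omega, by omega⟩,
      if_neg (by omega), if_neg (by omega), if_neg (by omega)]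
    congr 1

lemma conj_sf (n : ℕ) [NeZero n] (y : Equiv.Perm (Fin n)) (i : ℕ) (hi1 : 1 ≤ i)
    (hi : i < n) :
    y * (Fin.revPerm * GU.sf n i * Fin.revPerm) * y⁻¹ =
      Equiv.swap (y ((n - i : ℕ) : Fin n)) (y ((n - 1 - i : ℕ) : Fin n)) := by
  have hrev : ∀ p : ℕ, p < n → Fin.rev ((p : ℕ) : Fin n) = ((n - 1 - p : ℕ) : Fin n) := by
    intro p hp
    apply Fin.ext
    rw [Fin.val_rev, Fin.val_cast_of_lt hp, Fin.val_cast_of_lt (by omega)]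
    omega
  have h1 : Fin.revPerm * GU.sf n i * Fin.revPerm =
      Equiv.swap ((n - i : ℕ) : Fin n) ((n - 1 - i : ℕ) : Fin n) := by
    unfold GU.sf
    have : (Fin.revPerm : Equiv.Perm (Fin n)) = (Fin.revPerm : Equiv.Perm (Fin n))⁻¹ := rfl
    nth_rewrite 2 [this]
    rw [← Equiv.swap_apply_apply]
    simp only [Fin.revPerm_apply]
    rw [hrev (i - 1) (by omega), hrev i hi]
    congr 2
    omega
  rw [h1, ← Equiv.swap_apply_apply]

end Aux

open Fin.NatCast in
/-- the conjugates `y_{k,k+1} σ(s_i) y_{k,k+1}⁻¹` in `S_n`,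
where `σ(u) = w₀ u w₀` and `y_{k,k+1} = s_{[n-2,k]} s_{[n-1,k+1]}`. -/
theorem stmt10 (n : ℕ) [NeZero n] (hn : 4 ≤ n) (k : ℕ) (hk : 2 ≤ k) (hk2 : 2 * k ≤ n) :
    let y : Equiv.Perm (Fin n) := GU.sfdesc n (n - 2) k * GU.sfdesc n (n - 1) (k + 1)
    (∀ i : ℕ, 1 ≤ i → i ≤ n - k - 2 →
      y * (Fin.revPerm * GU.sf n i * Fin.revPerm) * y⁻¹ = GU.sf n (n - i - 2)) ∧
    (y * (Fin.revPerm * GU.sf n (n - k - 1) * Fin.revPerm) * y⁻¹ =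
      Equiv.swap ((k - 1 : ℕ) : Fin n) ((n - 1 : ℕ) : Fin n)) ∧
    (y * (Fin.revPerm * GU.sf n (n - k) * Fin.revPerm) * y⁻¹ = GU.sf n (n - 1)) ∧
    (y * (Fin.revPerm * GU.sf n (n - k + 1) * Fin.revPerm) * y⁻¹ =
      Equiv.swap ((k - 2 : ℕ) : Fin n) ((n - 2 : ℕ) : Fin n)) ∧
    (∀ i : ℕ, n - k + 2 ≤ i → i ≤ n - 1 →
      y * (Fin.revPerm * GU.sf n i * Fin.revPerm) * y⁻¹ = GU.sf n (n - i)) := by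
  intro y
  refine ⟨?_, ?_, ?_, ?_, ?_⟩
  · intro i hi1 hi2
    rw [conj_sf n y i hi1 (by omega),
      y_apply n k hn hk hk2 (n - i) (by omega),
      y_apply n k hn hk hk2 (n - 1 - i) (by omega),
      if_neg (by omega), if_neg (by omega), if_neg (by omega),
      if_neg (by omega), if_neg (by omega), if_neg (by omega)]
    unfold GU.sf
    rw [show n - 1 - i - 2 = n - i - 2 - 1 from by omega, Equiv.swap_comm]
  · rw [conj_sf n y (n - k - 1) (by omega) (by omega),
      show n - (n - k - 1) = k + 1 from by omega,
      show n - 1 - (n - k - 1) = k from by omega,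
      y_apply n k hn hk hk2 (k + 1) (by omega),
      y_apply n k hn hk hk2 k (by omega),
      if_neg (by omega), if_neg (by omega), if_neg (by omega),
      if_neg (by omega), if_neg (by omega), if_pos rfl,
      show k + 1 - 2 = k - 1 from by omega]
  · rw [conj_sf n y (n - k) (by omega) (by omega),
      show n - (n - k) = k from by omega,
      show n - 1 - (n - k) = k - 1 from by omega,
      y_apply n k hn hk hk2 k (by omega),
      y_apply n k hn hk hk2 (k - 1) (by omega),
      if_neg (by omega), if_neg (by omega), if_pos rfl,
      if_neg (by omega), if_pos rfl]
    unfold GU.sf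
    rw [show n - 1 - 1 = n - 2 from by omega, Equiv.swap_comm]
  · rw [conj_sf n y (n - k + 1) (by omega) (by omega),
      show n - (n - k + 1) = k - 1 from by omega,
      show n - 1 - (n - k + 1) = k - 2 from by omega,
      y_apply n k hn hk hk2 (k - 1) (by omega),
      y_apply n k hn hk hk2 (k - 2) (by omega),
      if_neg (by omega), if_pos rfl, if_pos (by omega), Equiv.swap_comm]
  · intro i hi1 hi2
    rw [conj_sf n y i (by omega) (by omega),
      y_apply n k hn hk hk2 (n - i) (by omega),
      y_apply n k hn hk hk2 (n - 1 - i) (by omega),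
      if_pos (by omega), if_pos (by omega)]
    unfold GU.sf
    rw [show n - 1 - i = n - i - 1 from by omega, Equiv.swap_comm]
end
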